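/- arXiv:1205.1844 — 2 statements merged into one kernel-verified Lean document; each statement's English description precedes it below -/
import Mathlib

section
/- Let T > 0, 0 < η < T, β ≥ 0, and α > 2T/η². If y : [0,T] → [0,∞) is continuous, then there is no twice continuously differentiable function u on [0,T] satisfying u''(t) + y(t) = 0 on (0,T), u(0) = β u(η), u(T) = α ∫₀^η u(s) ds, u(t) ≥ 0 for all t ∈ [0,T], and u(t) > 0 for some t ∈ [0,T]. -/
/-!
A solution `u` is concave, since `u'' = -y ≤ 0`. Concavity and `u 0 ≥ 0` put `u` above the chord
`s ↦ (s / T) u T`, so `∫₀^η u ≥ η² / (2T) · u T`. Concavity and nonnegativity at the endpoints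
make `u` positive on `(0, T)` once it is positive somewhere, so `∫₀^η u > 0` and
`u T = α ∫₀^η u > 0`. Then `u T ≥ α η² / (2T) · u T > u T`.
-/

open Set MeasureTheory

lemma concaveOn_Icc_of_hasDerivWithinAt2_nonpos {f f' f'' : ℝ → ℝ} {a b : ℝ}
    (hf : ∀ x ∈ Icc a b, HasDerivWithinAt f (f' x) (Icc a b) x)
    (hf' : ∀ x ∈ Ioo a b, HasDerivWithinAt f' (f'' x) (Icc a b) x)
    (hf'' : ∀ x ∈ Ioo a b, f'' x ≤ 0) : ConcaveOn ℝ (Icc a b) f := by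
  refine concaveOn_of_hasDerivWithinAt2_nonpos (f' := f') (f'' := f'') (convex_Icc a b)
    (fun x hx ↦ (hf x hx).continuousWithinAt) ?_ ?_ ?_ <;> rw [interior_Icc]
  · exact fun x hx ↦ (hf x (Ioo_subset_Icc_self hx)).mono Ioo_subset_Icc_self
  · exact fun x hx ↦ (hf' x hx).mono Ioo_subset_Icc_self
  · exact hf''

lemma ConcaveOn.secant_le {s : Set ℝ} {f : ℝ → ℝ} (hf : ConcaveOn ℝ s f) {p q x : ℝ}
    (hp : p ∈ s) (hq : q ∈ s) (hpx : p ≤ x) (hxq : x ≤ q) (hpq : p < q) :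
    (q - x) / (q - p) * f p + (x - p) / (q - p) * f q ≤ f x := by
  have hqp : q - p ≠ 0 := (sub_pos.2 hpq).ne'
  have hcomb : (q - x) / (q - p) * p + (x - p) / (q - p) * q = x := by
    field_simp
    ring
  have hsum : (q - x) / (q - p) + (x - p) / (q - p) = 1 := by
    field_simp
    ring
  simpa only [smul_eq_mul, hcomb] using
    hf.2 hp hq (div_nonneg (by linarith) (by linarith)) (div_nonneg (by linarith) (by linarith))
      hsum

lemma ConcaveOn.pos_of_mem_Ioo {f : ℝ → ℝ} {a b t x : ℝ} (hf : ConcaveOn ℝ (Icc a b) f)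
    (ha : 0 ≤ f a) (hb : 0 ≤ f b) (ht : t ∈ Icc a b) (hft : 0 < f t) (hx : x ∈ Ioo a b) :
    0 < f x := by
  have haI : a ∈ Icc a b := left_mem_Icc.2 (hx.1.trans hx.2).le
  have hbI : b ∈ Icc a b := right_mem_Icc.2 (hx.1.trans hx.2).le
  rcases lt_trichotomy x t with hxt | rfl | htx
  · have hat : a < t := hx.1.trans hxt
    have hsec := hf.secant_le haI ht hx.1.le hxt.le hat
    have : 0 ≤ (t - x) / (t - a) * f a := mul_nonneg (div_nonneg (by linarith) (by linarith)) ha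
    have : 0 < (x - a) / (t - a) * f t := mul_pos (div_pos (by linarith [hx.1]) (by linarith)) hft
    linarith
  · exact hft
  · have htb : t < b := htx.trans hx.2
    have hsec := hf.secant_le ht hbI htx.le hx.2.le htb
    have : 0 < (b - x) / (b - t) * f t := mul_pos (div_pos (by linarith [hx.2]) (by linarith)) hft
    have : 0 ≤ (x - t) / (b - t) * f b := mul_nonneg (div_nonneg (by linarith) (by linarith)) hb
    linarith

lemma ConcaveOn.div_mul_le {f : ℝ → ℝ} {T s : ℝ} (hf : ConcaveOn ℝ (Icc 0 T) f) (h0 : 0 ≤ f 0)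
    (hT : 0 < T) (hs : s ∈ Icc 0 T) : s / T * f T ≤ f s := by
  have hsec := hf.secant_le (left_mem_Icc.2 hT.le) (right_mem_Icc.2 hT.le) hs.1 hs.2 hT
  have : 0 ≤ (T - s) / (T - 0) * f 0 := mul_nonneg (div_nonneg (by linarith [hs.2]) (by linarith)) h0
  simp only [sub_zero] at hsec this
  linarith

lemma ConcaveOn.mul_le_integral {f : ℝ → ℝ} {T η : ℝ} (hf : ConcaveOn ℝ (Icc 0 T) f)
    (h0 : 0 ≤ f 0) (hT : 0 < T) (hη : 0 ≤ η) (hηT : η ≤ T)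
    (hint : IntervalIntegrable f volume 0 η) :
    η ^ 2 / (2 * T) * f T ≤ ∫ s in (0 : ℝ)..η, f s := by
  calc η ^ 2 / (2 * T) * f T = ∫ s in (0 : ℝ)..η, s / T * f T := by
        simp only [div_mul_eq_mul_div, intervalIntegral.integral_div,
          intervalIntegral.integral_mul_const, integral_id]
        ring
    _ ≤ ∫ s in (0 : ℝ)..η, f s :=
        intervalIntegral.integral_mono_on hη
          (((continuous_id.div_const T).mul_const (f T)).intervalIntegrable _ _) hint
          fun s hs ↦ hf.div_mul_le h0 hT ⟨hs.1, hs.2.trans hηT⟩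

theorem stmt_3_general (T η α β : ℝ) (hT : 0 < T) (hη0 : 0 < η) (hηT : η < T)
    (hα : 2 * T / η ^ 2 < α)
    (y : ℝ → ℝ)
    (hynn : ∀ t ∈ Set.Icc (0:ℝ) T, 0 ≤ y t) :
    ¬ ∃ u u' u'' : ℝ → ℝ,
      (∀ t ∈ Set.Icc (0:ℝ) T, HasDerivWithinAt u (u' t) (Set.Icc 0 T) t) ∧
      (∀ t ∈ Set.Icc (0:ℝ) T, HasDerivWithinAt u' (u'' t) (Set.Icc 0 T) t) ∧
      ContinuousOn u'' (Set.Icc 0 T) ∧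
      (∀ t ∈ Set.Ioo (0:ℝ) T, u'' t + y t = 0) ∧
      u 0 = β * u η ∧
      u T = α * (∫ s in (0:ℝ)..η, u s) ∧
      (∀ t ∈ Set.Icc (0:ℝ) T, 0 ≤ u t) ∧
      (∃ t ∈ Set.Icc (0:ℝ) T, 0 < u t) := by
  rintro ⟨u, u', u'', hu', hu'', -, hode, -, hbcT, hnn, t₀, ht₀, hut₀⟩
  have hconc : ConcaveOn ℝ (Icc 0 T) u :=
    concaveOn_Icc_of_hasDerivWithinAt2_nonpos hu' (fun x hx ↦ hu'' x (Ioo_subset_Icc_self hx))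
      fun x hx ↦ by linarith [hode x hx, hynn x (Ioo_subset_Icc_self hx)]
  have hu0 : 0 ≤ u 0 := hnn 0 (left_mem_Icc.2 hT.le)
  have hcont : ContinuousOn u (Icc 0 T) := fun t ht ↦ (hu' t ht).continuousWithinAt
  have hint : IntervalIntegrable u volume 0 η :=
    (hcont.mono (Icc_subset_Icc_right hηT.le)).intervalIntegrable_of_Icc hη0.le
  have hpos : 0 < ∫ s in (0 : ℝ)..η, u s :=
    intervalIntegral.intervalIntegral_pos_of_pos_on hint
      (fun x hx ↦ hconc.pos_of_mem_Ioo hu0 (hnn T (right_mem_Icc.2 hT.le)) ht₀ hut₀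
        ⟨hx.1, hx.2.trans hηT⟩) hη0
  have hα0 : 0 < α := (div_pos (by positivity) (by positivity)).trans hα
  have huT : 0 < u T := hbcT ▸ mul_pos hα0 hpos
  have hlow := hconc.mul_le_integral hu0 hT hη0.le hηT.le hint
  have hα' : 2 * T < α * η ^ 2 := (div_lt_iff₀ (by positivity)).1 hα
  have hle : α * η ^ 2 * u T ≤ 2 * T * u T :=
    calc α * η ^ 2 * u T = 2 * T * (α * (η ^ 2 / (2 * T) * u T)) := by field_simp
      _ ≤ 2 * T * (α * ∫ s in (0 : ℝ)..η, u s) := by gcongr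
      _ = 2 * T * u T := by rw [hbcT]
  linarith [mul_lt_mul_of_pos_right hα' huT]

theorem stmt_3 (T η α β : ℝ) (hT : 0 < T) (hη0 : 0 < η) (hηT : η < T)
    (hα : 2 * T / η ^ 2 < α) (hβ : 0 ≤ β)
    (y : ℝ → ℝ) (hy : ContinuousOn y (Set.Icc 0 T))
    (hynn : ∀ t ∈ Set.Icc (0:ℝ) T, 0 ≤ y t) :
    ¬ ∃ u u' u'' : ℝ → ℝ,
      (∀ t ∈ Set.Icc (0:ℝ) T, HasDerivWithinAt u (u' t) (Set.Icc 0 T) t) ∧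
      (∀ t ∈ Set.Icc (0:ℝ) T, HasDerivWithinAt u' (u'' t) (Set.Icc 0 T) t) ∧
      ContinuousOn u'' (Set.Icc 0 T) ∧
      (∀ t ∈ Set.Ioo (0:ℝ) T, u'' t + y t = 0) ∧
      u 0 = β * u η ∧
      u T = α * (∫ s in (0:ℝ)..η, u s) ∧
      (∀ t ∈ Set.Icc (0:ℝ) T, 0 ≤ u t) ∧
      (∃ t ∈ Set.Icc (0:ℝ) T, 0 < u t) :=
  stmt_3_general T η α β hT hη0 hηT hα y hynn
end

section
/- Let 0 < p < 1. Then there exists a twice continuously differentiable function u : [0,2] → ℝ satisfying u''(t) + t · u(t)^p = 0 for all t ∈ (0,2), u(0) = (1/2) u(3/2), u(2) = ∫₀^{3/2} u(s) ds, and u(t) > 0 for all t ∈ (0,2). -/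
/-!
The boundary value problem is the fixed-point equation `u = G (t u(t)^p)`, where `G` is the
Green operator of `-u''` under the two boundary conditions. Its kernel `K(t, s)` is nonnegative,
at least `s` for `s ≤ 3/2` and at most `28 (2 - s)`. Hence `G` is monotone and maps functions
with values in `[1, b]`, `b = 38^(1/(1-p))`, into themselves: the lower bound is
`∫₀^{3/2} s² ds = 9/8`, and sublinearity makes `38 b^p = b`. Iterating from `u ≡ 1` gives an
increasing bounded sequence whose limit is a fixed point by dominated convergence. Applying `G`
to that limit gives a continuous fixed point, and `G` of a continuous source is `C²`.
-/

open MeasureTheory Set Filter Topology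

section Primitives

variable {h : ℝ → ℝ}

theorem integral_sub_mul_eq {a t : ℝ} (hh : IntervalIntegrable h volume a t) :
    ∫ s in a..t, (t - s) * h s = t * (∫ s in a..t, h s) - ∫ s in a..t, s * h s := by
  have h1 : IntervalIntegrable (fun s => s * h s) volume a t := hh.continuousOn_mul continuousOn_id
  simp only [sub_mul]
  rw [intervalIntegral.integral_sub (hh.const_mul t) h1, intervalIntegral.integral_const_mul]

theorem integral_sub_sq_mul_eq {a t : ℝ} (hh : IntervalIntegrable h volume a t) :
    ∫ s in a..t, (t - s) ^ 2 / 2 * h s =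
      t ^ 2 / 2 * (∫ s in a..t, h s) - t * (∫ s in a..t, s * h s)
        + (∫ s in a..t, s ^ 2 * h s) / 2 := by
  have h1 : IntervalIntegrable (fun s => s * h s) volume a t := hh.continuousOn_mul continuousOn_id
  have h2 : IntervalIntegrable (fun s => s ^ 2 * h s) volume a t :=
    hh.continuousOn_mul (continuousOn_id.pow 2)
  have expand : ∀ s, (t - s) ^ 2 / 2 * h s =
      t ^ 2 / 2 * h s - t * (s * h s) + s ^ 2 * h s / 2 := fun s => by ring
  simp only [expand]
  rw [intervalIntegral.integral_add ((hh.const_mul _).sub (h1.const_mul t)) (h2.div_const 2),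
    intervalIntegral.integral_sub (hh.const_mul _) (h1.const_mul t),
    intervalIntegral.integral_const_mul, intervalIntegral.integral_const_mul,
    intervalIntegral.integral_div]

theorem hasDerivAt_integral_sub_mul (hh : Continuous h) (a t : ℝ) :
    HasDerivAt (fun x => ∫ s in a..x, (x - s) * h s) (∫ s in a..t, h s) t := by
  have hP : HasDerivAt (fun x => ∫ s in a..x, h s) (h t) t :=
    (hh.integral_hasStrictDerivAt a t).hasDerivAt
  have hQ : HasDerivAt (fun x => ∫ s in a..x, s * h s) (t * h t) t :=
    ((continuous_id.mul hh).integral_hasStrictDerivAt a t).hasDerivAt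
  rw [funext fun x => integral_sub_mul_eq (hh.intervalIntegrable a x)]
  exact (((hasDerivAt_id' t).mul hP).sub hQ).congr_deriv (by ring)

theorem hasDerivAt_integral_sub_sq_mul (hh : Continuous h) (a t : ℝ) :
    HasDerivAt (fun x => ∫ s in a..x, (x - s) ^ 2 / 2 * h s)
      (∫ s in a..t, (t - s) * h s) t := by
  have hP : HasDerivAt (fun x => ∫ s in a..x, h s) (h t) t :=
    (hh.integral_hasStrictDerivAt a t).hasDerivAt
  have hQ : HasDerivAt (fun x => ∫ s in a..x, s * h s) (t * h t) t :=
    ((continuous_id.mul hh).integral_hasStrictDerivAt a t).hasDerivAt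
  have hR : HasDerivAt (fun x => ∫ s in a..x, s ^ 2 * h s) (t ^ 2 * h t) t :=
    (((continuous_id.pow 2).mul hh).integral_hasStrictDerivAt a t).hasDerivAt
  have hsq : HasDerivAt (fun x : ℝ => x ^ 2 / 2) t t := by
    simpa using (hasDerivAt_pow 2 t).div_const 2
  rw [funext fun x => integral_sub_sq_mul_eq (hh.intervalIntegrable a x),
    integral_sub_mul_eq (hh.intervalIntegrable a t)]
  exact (((hsq.mul hP).sub ((hasDerivAt_id' t).mul hQ)).add (hR.div_const 2)).congr_deriv
    (by ring)

theorem integral_comp_max_sub_mul {φ f : ℝ → ℝ} (hφ : φ 0 = 0) {a b c : ℝ}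
    (hac : a ≤ c) (hcb : c ≤ b)
    (hf : IntervalIntegrable (fun s => φ (max (c - s) 0) * f s) volume a b) :
    ∫ s in a..b, φ (max (c - s) 0) * f s = ∫ s in a..c, φ (c - s) * f s := by
  have hc : c ∈ uIcc a b := mem_uIcc_of_le hac hcb
  rw [← intervalIntegral.integral_add_adjacent_intervals
    (hf.mono_set (uIcc_subset_uIcc left_mem_uIcc hc))
    (hf.mono_set (uIcc_subset_uIcc hc right_mem_uIcc))]
  have hleft : ∫ s in a..c, φ (max (c - s) 0) * f s = ∫ s in a..c, φ (c - s) * f s :=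
    intervalIntegral.integral_congr fun s hs => by
      rw [uIcc_of_le hac] at hs
      simp [max_eq_left (sub_nonneg.2 hs.2)]
  have hright : ∫ s in c..b, φ (max (c - s) 0) * f s = 0 := by
    rw [← intervalIntegral.integral_zero]
    refine intervalIntegral.integral_congr fun s hs => ?_
    rw [uIcc_of_le hcb] at hs
    simp [max_eq_right (sub_nonpos.2 hs.1), hφ]
  rw [hleft, hright, add_zero]

end Primitives

section Green

variable (h : ℝ → ℝ)

/-- The constants `greenA h`, `greenB h` are what the two boundary conditions force on
`u t = A + B t - ∫₀ᵗ (t - s) h(s) ds`, the general solution of `u'' = -h`. -/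
noncomputable def greenB : ℝ :=
  8 * (∫ s in (0:ℝ)..2, (2 - s) * h s) - 8 * (∫ s in (0:ℝ)..3/2, (3/2 - s) ^ 2 / 2 * h s)
    - 4 * ∫ s in (0:ℝ)..3/2, (3/2 - s) * h s

noncomputable def greenA : ℝ := 3/2 * greenB h - ∫ s in (0:ℝ)..3/2, (3/2 - s) * h s

noncomputable def green (t : ℝ) : ℝ :=
  greenA h + greenB h * t - ∫ s in (0:ℝ)..t, (t - s) * h s

variable {h}

theorem green_zero_eq : green h 0 = 1 / 2 * green h (3/2) := by
  simp only [green, intervalIntegral.integral_same, greenA]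
  ring

theorem continuous_green (hh : ∀ a b, IntervalIntegrable h volume a b) :
    Continuous (green h) := by
  have hP := intervalIntegral.continuous_primitive hh 0
  have hQ := intervalIntegral.continuous_primitive
    (fun a b => (hh a b).continuousOn_mul continuousOn_id) 0
  unfold green
  simp only [integral_sub_mul_eq (hh 0 _)]
  fun_prop

theorem hasDerivAt_green (hh : Continuous h) (t : ℝ) :
    HasDerivAt (green h) (greenB h - ∫ s in (0:ℝ)..t, h s) t :=
  (((hasDerivAt_id' t).const_mul (greenB h)).const_add (greenA h)).sub
    (hasDerivAt_integral_sub_mul hh 0 t) |>.congr_deriv (by ring)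

theorem hasDerivAt_deriv_green (hh : Continuous h) (t : ℝ) :
    HasDerivAt (fun x => greenB h - ∫ s in (0:ℝ)..x, h s) (-h t) t :=
  ((hh.integral_hasStrictDerivAt 0 t).hasDerivAt.const_sub (greenB h))

theorem green_two_eq_integral (hh : Continuous h) :
    green h 2 = ∫ s in (0:ℝ)..3/2, green h s := by
  have hF : ∀ x, HasDerivAt (fun x => greenA h * x + greenB h * (x ^ 2 / 2)
      - ∫ s in (0:ℝ)..x, (x - s) ^ 2 / 2 * h s) (green h x) x := fun x => by
    have hsq : HasDerivAt (fun x : ℝ => x ^ 2 / 2) x x := by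
      simpa using (hasDerivAt_pow 2 x).div_const 2
    exact ((((hasDerivAt_id' x).const_mul (greenA h)).add (hsq.const_mul (greenB h))).sub
      (hasDerivAt_integral_sub_sq_mul hh 0 x)).congr_deriv (by simp only [green]; ring)
  rw [intervalIntegral.integral_eq_sub_of_hasDerivAt (fun x _ => hF x)
    ((continuous_green fun a b => hh.intervalIntegrable a b).intervalIntegrable _ _)]
  simp only [green, greenA, greenB, intervalIntegral.integral_same]
  ring

end Green

section Kernel

variable {h : ℝ → ℝ} {t s : ℝ}

noncomputable def greenKernel (t s : ℝ) : ℝ :=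
  (3/2 + t) * (8 * (2 - s) - 8 * (max (3/2 - s) 0 ^ 2 / 2) - 4 * max (3/2 - s) 0)
    - max (3/2 - s) 0 - max (t - s) 0

theorem continuous_greenKernel (t : ℝ) : Continuous (greenKernel t) := by
  unfold greenKernel
  fun_prop

theorem intervalIntegrable_greenKernel_mul {a b : ℝ}
    (hh : IntervalIntegrable h volume a b) :
    IntervalIntegrable (fun s => greenKernel t s * h s) volume a b :=
  hh.continuousOn_mul (continuous_greenKernel t).continuousOn

theorem green_eq_integral_greenKernel (hh : IntervalIntegrable h volume 0 2)
    (ht : t ∈ Icc (0:ℝ) 2) : green h t = ∫ s in (0:ℝ)..2, greenKernel t s * h s := by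
  have hi : ∀ g : ℝ → ℝ, Continuous g →
      IntervalIntegrable (fun s => g s * h s) volume 0 2 :=
    fun g hg => hh.continuousOn_mul hg.continuousOn
  have e1 := integral_comp_max_sub_mul (φ := fun x => x) (c := 3/2) rfl (by norm_num)
    (by norm_num) (hi _ (by fun_prop))
  have e2 := integral_comp_max_sub_mul (φ := fun x => x ^ 2 / 2) (c := 3/2) (by norm_num)
    (by norm_num) (by norm_num) (hi _ (by fun_prop))
  have e3 := integral_comp_max_sub_mul (φ := fun x => x) rfl ht.1 ht.2 (hi _ (by fun_prop))
  have expand : ∀ s, greenKernel t s * h s =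
      (3/2 + t) * (8 * ((2 - s) * h s) - 8 * (max (3/2 - s) 0 ^ 2 / 2 * h s)
        - 4 * (max (3/2 - s) 0 * h s)) - max (3/2 - s) 0 * h s - max (t - s) 0 * h s :=
    fun s => by unfold greenKernel; ring
  simp only [expand]
  rw [intervalIntegral.integral_sub, intervalIntegral.integral_sub,
    intervalIntegral.integral_const_mul, intervalIntegral.integral_sub,
    intervalIntegral.integral_sub, intervalIntegral.integral_const_mul,
    intervalIntegral.integral_const_mul, intervalIntegral.integral_const_mul, e1, e2, e3]
  · simp only [green, greenA, greenB]
    ring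
  all_goals
    apply_rules [IntervalIntegrable.sub, IntervalIntegrable.const_mul, hi] <;> fun_prop

theorem green_congr {h₁ h₂ : ℝ → ℝ} (hh₁ : IntervalIntegrable h₁ volume 0 2)
    (hh₂ : IntervalIntegrable h₂ volume 0 2) (heq : EqOn h₁ h₂ (Icc 0 2))
    (ht : t ∈ Icc (0:ℝ) 2) : green h₁ t = green h₂ t := by
  rw [green_eq_integral_greenKernel hh₁ ht, green_eq_integral_greenKernel hh₂ ht]
  refine intervalIntegral.integral_congr fun s hs => ?_
  rw [uIcc_of_le zero_le_two] at hs
  simp only [heq hs]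

theorem le_greenKernel (ht : t ∈ Icc (0:ℝ) 2) (hs0 : 0 ≤ s) (hs : s ≤ 3/2) :
    s ≤ greenKernel t s := by
  obtain ⟨ht0, ht2⟩ := ht
  rw [greenKernel, max_eq_left (by linarith : (0:ℝ) ≤ 3/2 - s)]
  rcases max_cases (t - s) 0 with ⟨h, _⟩ | ⟨h, _⟩ <;> rw [h] <;>
    nlinarith [mul_nonneg ht0 hs0,
      mul_nonneg (mul_nonneg ht0 hs0) (by linarith : (0:ℝ) ≤ 2 - s)]

theorem greenKernel_nonneg (ht : t ∈ Icc (0:ℝ) 2) (hs : s ∈ Icc (0:ℝ) 2) :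
    0 ≤ greenKernel t s := by
  rcases le_total s (3/2) with h | h
  · exact hs.1.trans (le_greenKernel ht hs.1 h)
  · obtain ⟨ht0, ht2⟩ := ht
    rw [greenKernel, max_eq_right (by linarith : 3/2 - s ≤ 0)]
    rcases max_cases (t - s) 0 with ⟨h, _⟩ | ⟨h, _⟩ <;> rw [h] <;> nlinarith [hs.2]

theorem greenKernel_le (ht : t ∈ Icc (0:ℝ) 2) (hs : s ∈ Icc (0:ℝ) 2) :
    greenKernel t s ≤ 28 * (2 - s) := by
  obtain ⟨ht0, ht2⟩ := ht
  obtain ⟨hs0, hs2⟩ := hs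
  unfold greenKernel
  rcases max_cases (3/2 - s) 0 with ⟨h1, _⟩ | ⟨h1, _⟩ <;>
    rcases max_cases (t - s) 0 with ⟨h2, _⟩ | ⟨h2, _⟩ <;> rw [h1, h2] <;>
    nlinarith [sq_nonneg (s - 3/2)]

end Kernel

section Sublinear

variable {p : ℝ}

/-- Any constant above `28 ∫₀² s (2 - s) ds = 112/3` would do for `38`. -/
noncomputable def solBound (p : ℝ) : ℝ := 38 ^ (1 / (1 - p))

theorem one_le_solBound (hp1 : p < 1) : 1 ≤ solBound p :=
  Real.one_le_rpow (by norm_num) (one_div_nonneg.2 (sub_nonneg.2 hp1.le))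

theorem solBound_eq (hp1 : p < 1) : 38 * solBound p ^ p = solBound p := by
  have hp : 1 - p ≠ 0 := (sub_pos.2 hp1).ne'
  have hexp : 1 / (1 - p) = 1 + 1 / (1 - p) * p := by
    field_simp
    ring
  rw [solBound, ← Real.rpow_mul (by norm_num)]
  conv_rhs => rw [hexp, Real.rpow_add (by norm_num), Real.rpow_one]

noncomputable def source (p : ℝ) (w : ℝ → ℝ) (s : ℝ) : ℝ := s * w s ^ p

def Admissible (p : ℝ) (w : ℝ → ℝ) : Prop :=
  Measurable w ∧ ∀ t, w t ∈ Icc 1 (solBound p)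

theorem Continuous.source {w : ℝ → ℝ} (hp : 0 ≤ p) (hw : Continuous w) :
    Continuous (source p w) :=
  continuous_id.mul (hw.rpow_const fun _ => Or.inr hp)

namespace Admissible

variable {w v : ℝ → ℝ} {t s : ℝ} (hp : 0 ≤ p)
include hp

theorem rpow_mem (hw : Admissible p w) (s : ℝ) : w s ^ p ∈ Icc 1 (solBound p ^ p) :=
  ⟨Real.one_le_rpow (hw.2 s).1 hp,
    Real.rpow_le_rpow (zero_le_one.trans (hw.2 s).1) (hw.2 s).2 hp⟩

theorem intervalIntegrable_source (hw : Admissible p w) (a b : ℝ) :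
    IntervalIntegrable (source p w) volume a b := by
  have hpow : IntervalIntegrable (fun s => w s ^ p) volume a b :=
    (intervalIntegrable_const (c := solBound p ^ p)).mono_fun
      (hw.1.pow_const p).aestronglyMeasurable (ae_of_all _ fun s => by
        have hmem := hw.rpow_mem hp s
        show ‖w s ^ p‖ ≤ ‖solBound p ^ p‖
        rw [Real.norm_of_nonneg (zero_le_one.trans hmem.1),
          Real.norm_of_nonneg (zero_le_one.trans (hmem.1.trans hmem.2))]
        exact hmem.2)
  exact hpow.continuousOn_mul continuousOn_id

theorem source_mem (hw : Admissible p w) (hs : 0 ≤ s) :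
    source p w s ∈ Icc s (s * solBound p ^ p) :=
  ⟨le_mul_of_one_le_right hs (hw.rpow_mem hp s).1,
    mul_le_mul_of_nonneg_left (hw.rpow_mem hp s).2 hs⟩

theorem greenKernel_mul_source_mem (hw : Admissible p w) (ht : t ∈ Icc (0:ℝ) 2)
    (hs : s ∈ Icc (0:ℝ) 2) :
    greenKernel t s * source p w s ∈ Icc 0 (28 * (2 - s) * s * solBound p ^ p) := by
  have hsrc := hw.source_mem hp hs.1
  refine ⟨mul_nonneg (greenKernel_nonneg ht hs) (hs.1.trans hsrc.1), ?_⟩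
  rw [mul_assoc _ s]
  exact mul_le_mul (greenKernel_le ht hs) hsrc.2 (hs.1.trans hsrc.1) (by linarith [hs.2])

theorem green_source_le (hp1 : p < 1) (hw : Admissible p w) (ht : t ∈ Icc (0:ℝ) 2) :
    green (source p w) t ≤ solBound p := by
  have hb : 0 ≤ solBound p ^ p := Real.rpow_nonneg (zero_le_one.trans (one_le_solBound hp1)) p
  have hpoly : ∀ s : ℝ, 28 * (2 - s) * s * solBound p ^ p =
      56 * solBound p ^ p * s - 28 * solBound p ^ p * s ^ 2 := fun s => by ring
  rw [green_eq_integral_greenKernel (hw.intervalIntegrable_source hp 0 2) ht]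
  calc ∫ s in (0:ℝ)..2, greenKernel t s * source p w s
      ≤ ∫ s in (0:ℝ)..2, 28 * (2 - s) * s * solBound p ^ p :=
        intervalIntegral.integral_mono_on (by norm_num)
          (intervalIntegrable_greenKernel_mul (hw.intervalIntegrable_source hp 0 2))
          (by apply Continuous.intervalIntegrable; fun_prop)
          fun s hs => (hw.greenKernel_mul_source_mem hp ht hs).2
    _ = 112 / 3 * solBound p ^ p := by
        simp only [hpoly]
        rw [intervalIntegral.integral_sub (by apply Continuous.intervalIntegrable; fun_prop)
          (by apply Continuous.intervalIntegrable; fun_prop), intervalIntegral.integral_const_mul,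
          intervalIntegral.integral_const_mul, integral_id, integral_pow]
        ring
    _ ≤ 38 * solBound p ^ p := by linarith
    _ = solBound p := solBound_eq hp1

theorem one_le_green_source (hw : Admissible p w) (ht : t ∈ Icc (0:ℝ) 2) :
    1 ≤ green (source p w) t := by
  have hint := intervalIntegrable_greenKernel_mul (t := t) (hw.intervalIntegrable_source hp 0 2)
  have hint' : IntervalIntegrable (fun s => greenKernel t s * source p w s) volume 0 (3/2) :=
    hint.mono_set (uIcc_subset_uIcc left_mem_uIcc (by norm_num [mem_uIcc]))
  rw [green_eq_integral_greenKernel (hw.intervalIntegrable_source hp 0 2) ht]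
  calc (1:ℝ) ≤ ∫ s in (0:ℝ)..3/2, s * s := by norm_num [← sq, integral_pow]
    _ ≤ ∫ s in (0:ℝ)..3/2, greenKernel t s * source p w s :=
        intervalIntegral.integral_mono_on (by norm_num)
          (by apply Continuous.intervalIntegrable; fun_prop) hint'
          fun s hs => mul_le_mul (le_greenKernel ht hs.1 hs.2) (hw.source_mem hp hs.1).1 hs.1
            (hs.1.trans (le_greenKernel ht hs.1 hs.2))
    _ ≤ ∫ s in (0:ℝ)..2, greenKernel t s * source p w s :=
        intervalIntegral.integral_mono_interval le_rfl (by norm_num) (by norm_num)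
          ((ae_restrict_iff' measurableSet_Ioc).2 (ae_of_all _ fun s hs =>
            (hw.greenKernel_mul_source_mem hp ht (Ioc_subset_Icc_self hs)).1)) hint

theorem green_source_mono (hw : Admissible p w) (hv : Admissible p v) (hwv : ∀ s, w s ≤ v s)
    (ht : t ∈ Icc (0:ℝ) 2) : green (source p w) t ≤ green (source p v) t := by
  rw [green_eq_integral_greenKernel (hw.intervalIntegrable_source hp 0 2) ht,
    green_eq_integral_greenKernel (hv.intervalIntegrable_source hp 0 2) ht]
  refine intervalIntegral.integral_mono_on (by norm_num)
    (intervalIntegrable_greenKernel_mul (hw.intervalIntegrable_source hp 0 2))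
    (intervalIntegrable_greenKernel_mul (hv.intervalIntegrable_source hp 0 2)) fun s hs => ?_
  refine mul_le_mul_of_nonneg_left (mul_le_mul_of_nonneg_left ?_ hs.1) (greenKernel_nonneg ht hs)
  exact Real.rpow_le_rpow (zero_le_one.trans (hw.2 s).1) (hwv s) hp

end Admissible

end Sublinear

section Iteration

variable {p : ℝ}

/-- Clamping the argument into `[0, 2]` keeps every iterate between `1` and `solBound p` on
all of `ℝ`. -/
noncomputable def approxSol (p : ℝ) : ℕ → ℝ → ℝ
  | 0 => fun _ => 1
  | n + 1 => fun t => green (source p (approxSol p n)) (projIcc 0 2 zero_le_two t)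

theorem approxSol_succ_of_mem (n : ℕ) {t : ℝ} (ht : t ∈ Icc (0:ℝ) 2) :
    approxSol p (n + 1) t = green (source p (approxSol p n)) t := by
  simp only [approxSol, projIcc_of_mem _ ht]

noncomputable def approxSolLim (p : ℝ) (t : ℝ) : ℝ := ⨆ n, approxSol p n t

variable (hp : 0 ≤ p) (hp1 : p < 1)
include hp hp1

theorem admissible_approxSol : ∀ n, Admissible p (approxSol p n)
  | 0 => ⟨measurable_const, fun _ => ⟨le_rfl, one_le_solBound hp1⟩⟩
  | n + 1 => by
    have hn := admissible_approxSol n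
    refine ⟨?_, fun t => ⟨hn.one_le_green_source hp (projIcc 0 2 _ t).2,
      hn.green_source_le hp hp1 (projIcc 0 2 _ t).2⟩⟩
    exact ((continuous_green (hn.intervalIntegrable_source hp)).comp
      (continuous_subtype_val.comp continuous_projIcc)).measurable

theorem approxSol_le_succ : ∀ n t, approxSol p n t ≤ approxSol p (n + 1) t
  | 0, t => (admissible_approxSol hp hp1 0).one_le_green_source hp (projIcc 0 2 _ t).2
  | n + 1, t => (admissible_approxSol hp hp1 n).green_source_mono hp
      (admissible_approxSol hp hp1 (n + 1)) (approxSol_le_succ n) (projIcc 0 2 _ t).2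

theorem tendsto_approxSol (t : ℝ) :
    Tendsto (fun n => approxSol p n t) atTop (𝓝 (approxSolLim p t)) :=
  tendsto_atTop_ciSup (monotone_nat_of_le_succ fun n => approxSol_le_succ hp hp1 n t)
    ⟨solBound p, by rintro _ ⟨n, rfl⟩; exact ((admissible_approxSol hp hp1 n).2 t).2⟩

theorem admissible_approxSolLim : Admissible p (approxSolLim p) :=
  ⟨Measurable.iSup fun n => (admissible_approxSol hp hp1 n).1, fun t =>
    isClosed_Icc.mem_of_tendsto (tendsto_approxSol hp hp1 t)
      (Eventually.of_forall fun n => (admissible_approxSol hp hp1 n).2 t)⟩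

theorem tendsto_green_source_approxSol {t : ℝ} (ht : t ∈ Icc (0:ℝ) 2) :
    Tendsto (fun n => green (source p (approxSol p n)) t) atTop
      (𝓝 (green (source p (approxSolLim p)) t)) := by
  have hadm := admissible_approxSol hp hp1
  have hlim := (admissible_approxSolLim hp hp1).intervalIntegrable_source hp 0 2
  simp only [green_eq_integral_greenKernel ((hadm _).intervalIntegrable_source hp 0 2) ht,
    green_eq_integral_greenKernel hlim ht]
  refine intervalIntegral.tendsto_integral_filter_of_dominated_convergence
    (fun s => 28 * (2 - s) * s * solBound p ^ p)
    (Eventually.of_forall fun n => (intervalIntegrable_greenKernel_mul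
      ((hadm n).intervalIntegrable_source hp 0 2)).aestronglyMeasurable_restrict_uIoc)
    (Eventually.of_forall fun n => ae_of_all _ fun s hs => ?_)
    (by apply Continuous.intervalIntegrable; fun_prop)
    (ae_of_all _ fun s _ => (((tendsto_approxSol hp hp1 s).rpow_const (Or.inr hp)).const_mul
      s).const_mul (greenKernel t s))
  rw [uIoc_of_le zero_le_two] at hs
  have hmem := (hadm n).greenKernel_mul_source_mem hp ht (Ioc_subset_Icc_self hs)
  rw [Real.norm_of_nonneg hmem.1]
  exact hmem.2

theorem green_source_approxSolLim {t : ℝ} (ht : t ∈ Icc (0:ℝ) 2) :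
    green (source p (approxSolLim p)) t = approxSolLim p t := by
  refine tendsto_nhds_unique (tendsto_green_source_approxSol hp hp1 ht) ?_
  simpa only [Function.comp_def, approxSol_succ_of_mem _ ht] using
    (tendsto_approxSol hp hp1 t).comp (tendsto_add_atTop_nat 1)

theorem exists_continuous_fixedPoint :
    ∃ u : ℝ → ℝ, Continuous u ∧
      ∀ t ∈ Icc (0:ℝ) 2, green (source p u) t = u t ∧ 1 ≤ u t := by
  have hsol := admissible_approxSolLim hp hp1
  refine ⟨green (source p (approxSolLim p)), continuous_green (hsol.intervalIntegrable_source hp),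
    fun t ht => ⟨?_, hsol.one_le_green_source hp ht⟩⟩
  refine green_congr (((continuous_green (hsol.intervalIntegrable_source hp)).source hp)
    |>.intervalIntegrable 0 2) (hsol.intervalIntegrable_source hp 0 2) (fun s hs => ?_) ht
  simp only [source, green_source_approxSolLim hp hp1 hs]

end Iteration

theorem stmt_11 (p : ℝ) (hp0 : 0 < p) (hp1 : p < 1) :
    ∃ u u' u'' : ℝ → ℝ,
      (∀ t ∈ Set.Icc (0:ℝ) 2, HasDerivWithinAt u (u' t) (Set.Icc 0 2) t) ∧
      (∀ t ∈ Set.Icc (0:ℝ) 2, HasDerivWithinAt u' (u'' t) (Set.Icc 0 2) t) ∧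
      ContinuousOn u'' (Set.Icc 0 2) ∧
      (∀ t ∈ Set.Ioo (0:ℝ) 2, u'' t + t * u t ^ p = 0) ∧
      u 0 = (1 / 2) * u (3 / 2) ∧
      u 2 = (∫ s in (0:ℝ)..(3 / 2), u s) ∧
      (∀ t ∈ Set.Ioo (0:ℝ) 2, 0 < u t) := by
  obtain ⟨u, hu, hfix⟩ := exists_continuous_fixedPoint hp0.le hp1
  have hf : Continuous (source p u) := hu.source hp0.le
  refine ⟨green (source p u), fun t => greenB (source p u) - ∫ s in (0:ℝ)..t, source p u s,
    fun t => -source p u t, fun t _ => (hasDerivAt_green hf t).hasDerivWithinAt,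
    fun t _ => (hasDerivAt_deriv_green hf t).hasDerivWithinAt, hf.neg.continuousOn,
    fun t ht => ?_, green_zero_eq, green_two_eq_integral hf,
    fun t ht => zero_lt_one.trans_le ?_⟩
  · simp only [(hfix t (Ioo_subset_Icc_self ht)).1, source, neg_add_cancel]
  · rw [(hfix t (Ioo_subset_Icc_self ht)).1]
    exact (hfix t (Ioo_subset_Icc_self ht)).2
end
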